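/- As d → ∞, the ratio of C(d) := (2√(d−1)/π) ∫₀^∞ sqrt(d(d−1)r⁴ + 2dr² + 2)/((dr²+1)(r²+1)) dr to 1 + √(d−2) tends to 1. -/

import Mathlib

open MeasureTheory Filter Real

/-! Squeezing the integrand between `√(d(d-1)) r²` and `√(d(d-1)) r² + √2` reduces `C(d)` to
integrals of rational functions, which partial fractions evaluate through
`∫₀^∞ dr/(Dr²+1) = π/(2√D)`. This gives `√d - 1 ≤ C(d) ≤ √d - 1 + √2`, so `C(d)` stays within
bounded distance of `1 + √(d-2)`, which tends to infinity. -/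

open Set Asymptotics Topology

section RationalIntegrals

variable {D : ℝ}

theorem inv_one_add_sq_sqrt_mul (hD : 0 ≤ D) (r : ℝ) :
    (1 + (√D * r) ^ 2)⁻¹ = (D * r ^ 2 + 1)⁻¹ := by
  rw [mul_pow, sq_sqrt hD, add_comm]

theorem integrable_inv_mul_sq_add_one (hD : 0 < D) :
    Integrable fun r : ℝ => (D * r ^ 2 + 1)⁻¹ := by
  simpa only [inv_one_add_sq_sqrt_mul hD.le] using
    integrable_inv_one_add_sq.comp_mul_left' (sqrt_pos.2 hD).ne'

theorem integral_Ioi_inv_mul_sq_add_one (hD : 0 < D) :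
    ∫ r in Ioi (0 : ℝ), (D * r ^ 2 + 1)⁻¹ = π / (2 * √D) := by
  have h := integral_comp_mul_left_Ioi (fun x => (1 + x ^ 2)⁻¹) 0 (sqrt_pos.2 hD)
  simp only [inv_one_add_sq_sqrt_mul hD.le, mul_zero, integral_Ioi_inv_one_add_sq, arctan_zero,
    sub_zero, smul_eq_mul] at h
  rw [h, inv_mul_eq_div, div_div, mul_comm]

theorem integrable_inv_sq_add_one : Integrable fun r : ℝ => (r ^ 2 + 1)⁻¹ := by
  simpa using integrable_inv_mul_sq_add_one one_pos

theorem div_mul_sq_add_one_mul_sq_add_one (hD : 0 < D) (hD1 : D ≠ 1) (a b r : ℝ) :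
    (a * r ^ 2 + b) / ((D * r ^ 2 + 1) * (r ^ 2 + 1)) =
      (b * D - a) / (D - 1) * (D * r ^ 2 + 1)⁻¹ + (a - b) / (D - 1) * (r ^ 2 + 1)⁻¹ := by
  have : D - 1 ≠ 0 := sub_ne_zero.2 hD1
  field_simp
  ring

theorem integrable_div_mul_sq_add_one_mul_sq_add_one (hD : 0 < D) (hD1 : D ≠ 1) (a b : ℝ) :
    Integrable fun r : ℝ => (a * r ^ 2 + b) / ((D * r ^ 2 + 1) * (r ^ 2 + 1)) := by
  simp only [div_mul_sq_add_one_mul_sq_add_one hD hD1]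
  exact ((integrable_inv_mul_sq_add_one hD).const_mul _).add
    (integrable_inv_sq_add_one.const_mul _)

theorem integral_Ioi_div_mul_sq_add_one_mul_sq_add_one (hD : 0 < D) (hD1 : D ≠ 1) (a b : ℝ) :
    ∫ r in Ioi (0 : ℝ), (a * r ^ 2 + b) / ((D * r ^ 2 + 1) * (r ^ 2 + 1)) =
      π / 2 * (a / √D + b) / (√D + 1) := by
  have h1 : ∫ r in Ioi (0 : ℝ), (r ^ 2 + 1)⁻¹ = π / 2 := by
    simpa using integral_Ioi_inv_mul_sq_add_one one_pos
  simp only [div_mul_sq_add_one_mul_sq_add_one hD hD1]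
  rw [integral_add ((integrable_inv_mul_sq_add_one hD).const_mul _).integrableOn
      (integrable_inv_sq_add_one.const_mul _).integrableOn,
    integral_const_mul, integral_const_mul, integral_Ioi_inv_mul_sq_add_one hD, h1]
  have hs : 0 < √D := sqrt_pos.2 hD
  have hDs : D = √D ^ 2 := (sq_sqrt hD.le).symm
  generalize √D = s at hs hDs ⊢
  subst hDs
  have hs1 : s - 1 ≠ 0 := fun h => hD1 (by rw [sub_eq_zero.1 h]; norm_num)
  have hs1' : s ^ 2 - 1 ≠ 0 := by rw [show s ^ 2 - 1 = (s - 1) * (s + 1) by ring]; positivity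
  field_simp
  ring

end RationalIntegrals

noncomputable def criticalPointDensity (D r : ℝ) : ℝ :=
  √(D * (D - 1) * r ^ 4 + 2 * D * r ^ 2 + 2) / ((D * r ^ 2 + 1) * (r ^ 2 + 1))

noncomputable def expectedCriticalPoints (D : ℝ) : ℝ :=
  2 * √(D - 1) / π * ∫ r in Ioi (0 : ℝ), criticalPointDensity D r

section Bounds

variable {D : ℝ}

theorem sqrt_mul_sqrt_sub_one_mul_sq_le (hD : 1 ≤ D) (r : ℝ) :
    √D * √(D - 1) * r ^ 2 ≤ √(D * (D - 1) * r ^ 4 + 2 * D * r ^ 2 + 2) := by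
  rw [← sqrt_mul (by linarith), ← sqrt_sq (by positivity : 0 ≤ √(D * (D - 1)) * r ^ 2)]
  refine sqrt_le_sqrt ?_
  rw [mul_pow, sq_sqrt (by nlinarith)]
  nlinarith [sq_nonneg r]

/-- The cross term `2√2·√(D(D-1))` of the square dominates `2D` exactly when `D ≥ 2`. -/
theorem sqrt_le_sqrt_mul_sqrt_sub_one_mul_sq_add_sqrt_two (hD : 2 ≤ D) (r : ℝ) :
    √(D * (D - 1) * r ^ 4 + 2 * D * r ^ 2 + 2) ≤ √D * √(D - 1) * r ^ 2 + √2 := by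
  rw [← sqrt_mul (by linarith)]
  set A := √(D * (D - 1))
  have hA2 : A ^ 2 = D * (D - 1) := sq_sqrt (by nlinarith)
  have h22 : √2 ^ 2 = 2 := sq_sqrt zero_le_two
  have hcross : D ≤ √2 * A := by
    rw [← sqrt_mul zero_le_two, le_sqrt' (by linarith)]
    nlinarith
  rw [sqrt_le_left (by positivity),
    show (A * r ^ 2 + √2) ^ 2 = A ^ 2 * r ^ 4 + 2 * (√2 * A) * r ^ 2 + √2 ^ 2 by ring, hA2, h22]
  nlinarith [mul_le_mul_of_nonneg_right hcross (sq_nonneg r)]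

theorem integrableOn_criticalPointDensity (hD : 2 ≤ D) :
    IntegrableOn (criticalPointDensity D) (Ioi 0) := by
  refine (integrable_div_mul_sq_add_one_mul_sq_add_one (by linarith) (by linarith)
    (√D * √(D - 1)) √2).integrableOn.mono' ?_ (ae_of_all _ fun r => ?_)
  · exact (Continuous.div (by fun_prop) (by fun_prop) fun r => by positivity).aestronglyMeasurable
  · rw [norm_of_nonneg (by unfold criticalPointDensity; positivity)]
    exact div_le_div_of_nonneg_right
      (sqrt_le_sqrt_mul_sqrt_sub_one_mul_sq_add_sqrt_two hD r) (by positivity)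

theorem sqrt_sub_one_le_expectedCriticalPoints (hD : 2 ≤ D) :
    √D - 1 ≤ expectedCriticalPoints D := by
  have hint : π / 2 * (√D * √(D - 1) / √D + 0) / (√D + 1) ≤
      ∫ r in Ioi (0 : ℝ), criticalPointDensity D r := by
    rw [← integral_Ioi_div_mul_sq_add_one_mul_sq_add_one (by linarith) (by linarith)]
    refine setIntegral_mono_on
      (integrable_div_mul_sq_add_one_mul_sq_add_one (by linarith) (by linarith) _ _).integrableOn
      (integrableOn_criticalPointDensity hD) measurableSet_Ioi fun r _ => ?_
    rw [add_zero]
    exact div_le_div_of_nonneg_right (sqrt_mul_sqrt_sub_one_mul_sq_le (by linarith) r)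
      (by positivity)
  calc √D - 1 = 2 * √(D - 1) / π * (π / 2 * (√D * √(D - 1) / √D + 0) / (√D + 1)) := by
        have := sq_sqrt (by linarith : (0 : ℝ) ≤ D - 1)
        have := sq_sqrt (by linarith : (0 : ℝ) ≤ D)
        field_simp
        nlinarith
    _ ≤ expectedCriticalPoints D := by unfold expectedCriticalPoints; gcongr

theorem expectedCriticalPoints_le_sqrt_sub_one_add_sqrt_two (hD : 2 ≤ D) :
    expectedCriticalPoints D ≤ √D - 1 + √2 := by
  have hint : ∫ r in Ioi (0 : ℝ), criticalPointDensity D r ≤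
      π / 2 * (√D * √(D - 1) / √D + √2) / (√D + 1) := by
    rw [← integral_Ioi_div_mul_sq_add_one_mul_sq_add_one (by linarith) (by linarith)]
    exact setIntegral_mono_on (integrableOn_criticalPointDensity hD)
      (integrable_div_mul_sq_add_one_mul_sq_add_one (by linarith) (by linarith) _ _).integrableOn
      measurableSet_Ioi fun r _ => div_le_div_of_nonneg_right
        (sqrt_le_sqrt_mul_sqrt_sub_one_mul_sq_add_sqrt_two hD r) (by positivity)
  have ht : √(D - 1) ≤ √D := sqrt_le_sqrt (by linarith)
  calc expectedCriticalPoints D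
        ≤ 2 * √(D - 1) / π * (π / 2 * (√D * √(D - 1) / √D + √2) / (√D + 1)) := by
        unfold expectedCriticalPoints; gcongr
    _ = √D - 1 + √2 * (√(D - 1) / (√D + 1)) := by
        have := sq_sqrt (by linarith : (0 : ℝ) ≤ D - 1)
        have := sq_sqrt (by linarith : (0 : ℝ) ≤ D)
        field_simp
        nlinarith
    _ ≤ √D - 1 + √2 := by
        gcongr
        exact mul_le_of_le_one_right (sqrt_nonneg 2) ((div_le_one (by positivity)).2 (by linarith))

end Bounds

theorem tendsto_div_nhds_one_of_abs_sub_le {α : Type*} {l : Filter α} {f g : α → ℝ}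
    {K : ℝ} (hfg : ∀ᶠ x in l, |f x - g x| ≤ K) (hg : Tendsto g l atTop) :
    Tendsto (fun x => f x / g x) l (𝓝 1) := by
  have hbdd : (f - g) =O[l] (fun _ => (1 : ℝ)) :=
    (isBigO_one_iff ℝ).2 ⟨K, hfg.mono fun x hx => by simpa using hx⟩
  have hequiv : f ~[l] g :=
    hbdd.trans_isLittleO ((isLittleO_one_left_iff ℝ).2 (tendsto_norm_atTop_atTop.comp hg))
  exact (isEquivalent_iff_tendsto_one (hg.eventually_ne_atTop 0)).1 hequiv

theorem abs_expectedCriticalPoints_sub_le_two {D : ℝ} (hD : 2 ≤ D) :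
    |expectedCriticalPoints D - (1 + √(D - 2))| ≤ 2 := by
  have hlow := sqrt_sub_one_le_expectedCriticalPoints hD
  have hupp := expectedCriticalPoints_le_sqrt_sub_one_add_sqrt_two hD
  have hmono : √(D - 2) ≤ √D := sqrt_le_sqrt (by linarith)
  have hsub : √D ≤ √(D - 2) + √2 := by
    rw [sqrt_le_left (by positivity), add_sq, sq_sqrt (by linarith), sq_sqrt zero_le_two]
    nlinarith [mul_nonneg (sqrt_nonneg (D - 2)) (sqrt_nonneg 2)]
  have hsqrt2 : √2 ≤ 3 / 2 := by
    rw [sqrt_le_left (by norm_num)]; norm_num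
  rw [abs_le]
  constructor <;> linarith

/-- As `d → ∞`, the expected number of critical points
`C(d) = (2√(d−1)/π) ∫₀^∞ √(d(d−1)r⁴+2dr²+2)/((dr²+1)(r²+1)) dr` of a
Bombieri–Weyl random univariate polynomial satisfies `C(d)/(1+√(d−2)) → 1`. -/
theorem expected_critical_points_asymptotics :
    Tendsto (fun d : ℕ =>
        (2 * Real.sqrt ((d : ℝ) - 1) / π *
          ∫ r in Set.Ioi (0 : ℝ),
            Real.sqrt ((d : ℝ) * ((d : ℝ) - 1) * r ^ 4 + 2 * d * r ^ 2 + 2) /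
              (((d : ℝ) * r ^ 2 + 1) * (r ^ 2 + 1))) /
          (1 + Real.sqrt ((d : ℝ) - 2)))
      atTop (nhds 1) := by
  have hcast : Tendsto (fun d : ℕ => (d : ℝ)) atTop atTop := tendsto_natCast_atTop_atTop
  have hdenom : Tendsto (fun d : ℕ => 1 + √((d : ℝ) - 2)) atTop atTop :=
    tendsto_atTop_add_const_left _ _ <|
      tendsto_sqrt_atTop.comp (tendsto_atTop_add_const_right _ (-2) hcast)
  refine tendsto_div_nhds_one_of_abs_sub_le (K := 2) (f := fun d : ℕ => expectedCriticalPoints d)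
    ?_ hdenom
  filter_upwards [hcast.eventually_ge_atTop 2] with d hd
  exact abs_expectedCriticalPoints_sub_le_two hd
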